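/- arXiv:1212.6853 — 2 statements merged into one kernel-verified Lean document; each statement's English description precedes it below -/
import Mathlib

section
/- For every a with 1 ≤ a ≤ F one has the congruence p_a r^{(2)} ≡ (−1)^{a−1} r^{(a+1)} (mod r). -/
/-- p_a r^{(2)} ≡ (−1)^{a−1} r^{(a+1)} (mod r) for 1 ≤ a ≤ F. -/
theorem stmt_9 (F : ℕ) (hF : 1 ≤ F) (n : ℕ → ℤ)
    (hn : ∀ a, 1 ≤ a → a ≤ F → 0 < n a) (hn1 : 2 ≤ n 1)
    (q : ℕ → ℕ → ℤ)
    (hq0 : ∀ k, 1 ≤ k → k ≤ F → q k (k - 1) = 1)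
    (hq1 : ∀ k, 1 ≤ k → k ≤ F → q k k = n k)
    (hqrec : ∀ k a, 1 ≤ k → k ≤ F → k + 1 ≤ a → a ≤ F →
      q k a = n a * q k (a - 1) + q k (a - 2))
    (r : ℕ → ℤ)
    (hr : ∀ k, 1 ≤ k → k ≤ F → r k = q k (F - 1) + q k F)
    (hrF1 : r (F + 1) = 1) (hrF2 : r (F + 2) = 1) :
    ∀ a, 1 ≤ a → a ≤ F →
      q 1 (a - 1) * r 2 ≡ (-1 : ℤ) ^ (a - 1) * r (a + 1) [ZMOD r 1] := by
  -- Front expansion of continuants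
  have hQ : ∀ k, 1 ≤ k → k + 2 ≤ F → ∀ a, k + 1 ≤ a → a ≤ F →
      q k a = n k * q (k + 1) a + q (k + 2) a := by
    intro k hk1 hk2 a
    induction a using Nat.strong_induction_on with
    | _ a ih =>
      intro ha1 ha2
      have hcase : a = k + 1 ∨ a = k + 2 ∨ k + 3 ≤ a := by omega
      rcases hcase with rfl | rfl | h3
      · -- a = k + 1
        have e1 := hqrec k (k + 1) hk1 (by omega) le_rfl (by omega)
        have h1 : k + 1 - 1 = k := by omega
        have h2 : k + 1 - 2 = k - 1 := by omega
        rw [h1, h2, hq0 k hk1 (by omega), hq1 k hk1 (by omega)] at e1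
        have e2 := hq1 (k + 1) (by omega) (by omega)
        have e3 := hq0 (k + 2) (by omega) hk2
        have h3 : k + 2 - 1 = k + 1 := by omega
        rw [h3] at e3
        rw [e1, e2, e3]; ring
      · -- a = k + 2
        have e1 := hqrec k (k + 2) hk1 (by omega) (by omega) hk2
        have h1 : k + 2 - 1 = k + 1 := by omega
        have h2 : k + 2 - 2 = k := by omega
        rw [h1, h2, hq1 k hk1 (by omega)] at e1
        have e1' := hqrec k (k + 1) hk1 (by omega) le_rfl (by omega)
        have h3 : k + 1 - 1 = k := by omega
        have h4 : k + 1 - 2 = k - 1 := by omega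
        rw [h3, h4, hq0 k hk1 (by omega), hq1 k hk1 (by omega)] at e1'
        have e2 := hqrec (k + 1) (k + 2) (by omega) (by omega) (by omega) hk2
        have h5 : k + 1 + 1 = k + 2 := rfl
        rw [h1, h2] at e2
        have e2' := hq1 (k + 1) (by omega) (by omega)
        have e2'' := hq0 (k + 1) (by omega) (by omega)
        have h6 : k + 1 - 1 = k := by omega
        rw [h6] at e2''
        have e3 := hq1 (k + 2) (by omega) hk2
        rw [e1, e1', e2, e2', e2'', e3]; ring
      · -- k + 3 ≤ a
        have e := hqrec k a hk1 (by omega) (by omega) ha2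
        have e1 := hqrec (k + 1) a (by omega) (by omega) (by omega) ha2
        have e2 := hqrec (k + 2) a (by omega) hk2 (by omega) ha2
        have ih1 := ih (a - 1) (by omega) (by omega) (by omega)
        have ih2 := ih (a - 2) (by omega) (by omega) (by omega)
        rw [e, e1, e2, ih1, ih2]; ring
  -- recursion for r
  have hR : ∀ k, 1 ≤ k → k ≤ F → r k = n k * r (k + 1) + r (k + 2) := by
    intro k hk1 hk2
    by_cases hkF : k = F
    · rw [hkF]
      rw [hr F (by omega) le_rfl, hq0 F (by omega) le_rfl, hq1 F (by omega) le_rfl,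
        hrF1, hrF2]
      ring
    by_cases hkF1 : k + 1 = F
    · have hFv : F = k + 1 := hkF1.symm
      subst hFv
      rw [hr k hk1 (by omega)]
      have h1 : k + 1 - 1 = k := by omega
      rw [h1]
      have e := hqrec k (k + 1) hk1 (by omega) le_rfl le_rfl
      have h2 : k + 1 - 2 = k - 1 := by omega
      rw [h1, h2, hq0 k hk1 (by omega), hq1 k hk1 (by omega)] at e
      have e2 := hr (k + 1) (by omega) le_rfl
      have e3 := hq0 (k + 1) (by omega) le_rfl
      rw [h1] at e2 e3
      rw [e, e2, e3, hq1 (k + 1) (by omega) le_rfl, hrF1, hq1 k hk1 (by omega)]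
      ring
    · have hk2F : k + 2 ≤ F := by omega
      rw [hr k hk1 hk2, hr (k + 1) (by omega) (by omega), hr (k + 2) (by omega) hk2F,
        hQ k hk1 hk2F (F - 1) (by omega) (by omega), hQ k hk1 hk2F F (by omega) le_rfl]
      ring
  intro a
  induction a using Nat.strong_induction_on with
  | _ a ih =>
    intro ha1 ha2
    rw [Int.modEq_iff_dvd]
    have hcase : a = 1 ∨ a = 2 ∨ 3 ≤ a := by omega
    rcases hcase with rfl | rfl | h3
    · have e := hq0 1 (by omega) hF
      norm_num at e ⊢
      rw [e]; ring_nf; exact dvd_zero _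
    · have e := hq1 1 (by omega) (by omega)
      have hR1 := hR 1 (by omega) hF
      norm_num at e hR1 ⊢
      exact ⟨-1, by rw [e]; linear_combination hR1⟩
    · obtain ⟨c, rfl⟩ : ∃ c, a = c + 3 := ⟨a - 3, by omega⟩
      have ih1 := Int.ModEq.dvd (ih (c + 2) (by omega) (by omega) (by omega))
      have ih2 := Int.ModEq.dvd (ih (c + 1) (by omega) (by omega) (by omega))
      have h1 : c + 2 - 1 = c + 1 := by omega
      have h2 : c + 1 - 1 = c := by omega
      have h3 : c + 3 - 1 = c + 2 := by omega
      rw [h1] at ih1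
      rw [h2] at ih2
      rw [h3]
      obtain ⟨m1, hm1⟩ := ih1
      obtain ⟨m2, hm2⟩ := ih2
      have e := hqrec 1 (c + 2) (by omega) hF (by omega) (by omega)
      have h4 : c + 2 - 1 = c + 1 := by omega
      have h5 : c + 2 - 2 = c := by omega
      rw [h4, h5] at e
      have hRk := hR (c + 2) (by omega) (by omega)
      rw [show c + 2 + 1 = c + 3 from by omega] at hm1 hRk
      rw [show c + 1 + 1 = c + 2 from by omega] at hm2
      rw [show c + 2 + 2 = c + 4 from by omega] at hRk
      rw [show c + 3 + 1 = c + 4 from by omega]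
      refine ⟨n (c + 2) * m1 + m2, ?_⟩
      linear_combination (-(r 2)) * e + (n (c + 2)) * hm1 + hm2 - ((-1 : ℤ)) ^ c * hRk
end

section
/- Define the rational number A_F := Σ_{a=1}^{F−1} (−1)^{a+1} / (p_a q_a) + (−1)^{F+1} / (p_F r). Then A_F = r^{(2)} / r. -/
/-- A_F := Σ_{a=1}^{F−1} (−1)^{a+1}/(p_a q_a) + (−1)^{F+1}/(p_F r) equals r^{(2)}/r. -/
theorem stmt_11 (F : ℕ) (hF : 1 ≤ F) (n : ℕ → ℤ)
    (hn : ∀ a, 1 ≤ a → a ≤ F → 0 < n a) (hn1 : 2 ≤ n 1)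
    (q : ℕ → ℕ → ℤ)
    (hq0 : ∀ k, 1 ≤ k → k ≤ F → q k (k - 1) = 1)
    (hq1 : ∀ k, 1 ≤ k → k ≤ F → q k k = n k)
    (hqrec : ∀ k a, 1 ≤ k → k ≤ F → k + 1 ≤ a → a ≤ F →
      q k a = n a * q k (a - 1) + q k (a - 2))
    (r : ℕ → ℤ)
    (hr : ∀ k, 1 ≤ k → k ≤ F → r k = q k (F - 1) + q k F)
    (hrF1 : r (F + 1) = 1) (hrF2 : r (F + 2) = 1) :
    (∑ a ∈ Finset.Icc 1 (F - 1),
        (-1 : ℚ) ^ (a + 1) / ((q 1 (a - 1) : ℚ) * (q 1 a : ℚ)))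
      + (-1 : ℚ) ^ (F + 1) / ((q 1 (F - 1) : ℚ) * (r 1 : ℚ))
      = (r 2 : ℚ) / (r 1 : ℚ) := by
  -- Case F = 1
  rcases Nat.lt_or_ge F 2 with hF1 | hF2
  · interval_cases F
    simp only [Nat.sub_self, Finset.Icc_self, show (1:ℕ) - 1 = 0 from rfl]
    rw [show Finset.Icc 1 0 = ∅ by decide]
    have h0 : q 1 0 = 1 := hq0 1 le_rfl le_rfl
    have h2 : r 2 = 1 := hrF1
    simp [h0, h2]
  -- Now F ≥ 2.
  obtain ⟨m, rfl⟩ : ∃ m, F = m + 2 := ⟨F - 2, by omega⟩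
  clear hF hF2
  set F := m + 2 with hFdef
  -- main induction
  have key : ∀ j, 1 ≤ j → j + 1 ≤ F →
      (0 < q 1 j ∧ 0 < q 1 (j+1)) ∧
      (q 1 j * q 2 (j+1) - q 1 (j+1) * q 2 j = (-1)^j) ∧
      ((∑ a ∈ Finset.Icc 1 j,
        (-1 : ℚ) ^ (a + 1) / ((q 1 (a - 1) : ℚ) * (q 1 a : ℚ))) = (q 2 j : ℚ) / (q 1 j : ℚ)) := by
    intro j hj
    induction j, hj using Nat.le_induction with
    | base =>
      intro h2F
      have hK0 : q 1 0 = 1 := hq0 1 (by omega) (by omega)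
      have hK1 : q 1 1 = n 1 := hq1 1 (by omega) (by omega)
      have hK2 : q 1 2 = n 2 * q 1 1 + q 1 0 := hqrec 1 2 (by omega) (by omega) (by omega) (by omega)
      have hL1 : q 2 1 = 1 := hq0 2 (by omega) (by omega)
      have hL2 : q 2 2 = n 2 := hq1 2 (by omega) (by omega)
      have hn2 : 0 < n 2 := hn 2 (by omega) (by omega)
      refine ⟨⟨by omega, by nlinarith⟩, by rw [hK2, hK1, hL1, hL2, hK0]; ring, ?_⟩
      rw [show Finset.Icc 1 1 = {1} by decide, Finset.sum_singleton]
      rw [hK0, hK1, hL1]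
      norm_num
    | succ j hj ih =>
      intro h2F
      obtain ⟨⟨hKj, hKj1⟩, hD, hS⟩ := ih (by omega)
      have hKrec : q 1 (j+2) = n (j+2) * q 1 (j+1) + q 1 j := by
        have := hqrec 1 (j+2) (by omega) (by omega) (by omega) (by omega)
        simpa using this
      have hLrec : q 2 (j+2) = n (j+2) * q 2 (j+1) + q 2 j := by
        have := hqrec 2 (j+2) (by omega) (by omega) (by omega) (by omega)
        simpa using this
      have hnj : 0 < n (j+2) := hn (j+2) (by omega) (by omega)
      have hKj2 : 0 < q 1 (j+2) := by nlinarith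
      refine ⟨⟨hKj1, hKj2⟩, ?_, ?_⟩
      · rw [hKrec, hLrec, pow_succ]
        nlinarith [hD]
      · rw [Finset.sum_Icc_succ_top (by omega : 1 ≤ j + 1), hS]
        have e1 : (q 1 j : ℚ) ≠ 0 := by exact_mod_cast hKj.ne'
        have e2 : (q 1 (j+1) : ℚ) ≠ 0 := by exact_mod_cast hKj1.ne'
        have hDq : (q 1 j : ℚ) * q 2 (j+1) - q 1 (j+1) * q 2 j = (-1)^j := by
          exact_mod_cast hD
        simp only [Nat.add_sub_cancel]
        field_simp
        linear_combination -hDq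
  -- apply at j = m + 1
  obtain ⟨⟨hKm1, hKm2⟩, hD, hS⟩ := key (m+1) (by omega) (by omega)
  rw [show m+1+1 = m+2 from rfl] at hKm2 hD
  have hFm : F - 1 = m + 1 := by omega
  have hr1 : r 1 = q 1 (m+1) + q 1 (m+2) := by
    have := hr 1 (by omega) (by omega); rwa [hFm] at this
  have hr2 : r 2 = q 2 (m+1) + q 2 (m+2) := by
    have := hr 2 (by omega) (by omega); rwa [hFm] at this
  rw [hFm, hS, hr1, hr2]
  have e1 : (q 1 (m+1) : ℚ) ≠ 0 := by exact_mod_cast hKm1.ne'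
  have e2 : ((q 1 (m+1) : ℚ) + q 1 (m+2)) ≠ 0 := by
    have : (0:ℤ) < q 1 (m+1) + q 1 (m+2) := by omega
    exact_mod_cast this.ne'
  have hDq : (q 1 (m+1) : ℚ) * q 2 (m+2) - q 1 (m+2) * q 2 (m+1) = (-1)^(m+1) := by
    exact_mod_cast hD
  push_cast
  field_simp
  rw [show F + 1 = m + 1 + 2 from rfl, pow_add]
  linear_combination -hDq
end
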